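/- arXiv:2309.12682 — 3 statements merged into one kernel-verified Lean document; each statement's English description precedes it below -/
import Mathlib

section
/- Let T be a finite tree and u a vertex of T. Then there exist vertices v, w of T such that F_T(u,v,w) = ε₃(u;T) and d_T(u,v) = ε₂(u;T); that is, a vertex at maximum distance from u can always be chosen as one of the Fermat eccentric vertices of u. -/
open SimpleGraph Finset

variable {V : Type*}

/-- The Fermat distance of a vertex triple: minimum over all vertices σ of
    `d(σ,u) + d(σ,v) + d(σ,w)`. -/
noncomputable def fermatDist (G : SimpleGraph V) (u v w : V) : ℕ :=
  ⨅ σ : V, (G.dist σ u + G.dist σ v + G.dist σ w)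

/-- The Fermat eccentricity `ε₃(u;G)`: maximum Fermat distance of triples containing `u`. -/
noncomputable def fermatEcc [Fintype V] (G : SimpleGraph V) (u : V) : ℕ :=
  Finset.univ.sup fun p : V × V => fermatDist G u p.1 p.2

/-- The ordinary eccentricity `ε₂(u;G)`. -/
noncomputable def ecc2 [Fintype V] (G : SimpleGraph V) (u : V) : ℕ :=
  Finset.univ.sup fun v => G.dist u v

/-- The diameter of `G`. -/
noncomputable def gdiam [Fintype V] (G : SimpleGraph V) : ℕ :=
  Finset.univ.sup fun p : V × V => G.dist p.1 p.2

/-- A central vertex: one minimizing the ordinary eccentricity. -/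
def isCentral [Fintype V] (G : SimpleGraph V) (c : V) : Prop :=
  ∀ u : V, ecc2 G c ≤ ecc2 G u

/-- The number of edges of `G`. -/
noncomputable def numEdges [Fintype V] (G : SimpleGraph V) : ℕ :=
  letI := Classical.decEq V
  letI := Classical.decRel G.Adj
  G.edgeFinset.card

/-- The first Zagreb–Fermat eccentricity index `F₁(G) = Σ_u ε₃(u)²`. -/
noncomputable def F1 [Fintype V] (G : SimpleGraph V) : ℕ :=
  ∑ u : V, (fermatEcc G u) ^ 2

/-- The second Zagreb–Fermat eccentricity index `F₂(G) = Σ_{uv ∈ E} ε₃(u)·ε₃(v)`. -/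
noncomputable def F2 [Fintype V] (G : SimpleGraph V) : ℕ :=
  letI := Classical.decEq V
  letI := Classical.decRel G.Adj
  ∑ e ∈ G.edgeFinset,
    Sym2.lift ⟨fun u v => fermatEcc G u * fermatEcc G v, fun _ _ => mul_comm _ _⟩ e

/-- `u` lies in the subtree `T_{v_i}` hanging off the `i`-th vertex of the path `P`:
its geodesic to every vertex of `P` passes through `P.getVert i`. -/
def inSubtree (G : SimpleGraph V) {a b : V} (P : G.Walk a b) (i : ℕ) (u : V) : Prop :=
  ∀ j ≤ P.length, G.dist u (P.getVert j) = G.dist u (P.getVert i) + G.dist (P.getVert i) (P.getVert j)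

/-- `ℓ_i`: the height of the subtree `T_{v_i}`. -/
noncomputable def subtreeHeight [Fintype V] (G : SimpleGraph V) {a b : V} (P : G.Walk a b)
    (i : ℕ) : ℕ :=
  letI := Classical.decPred (inSubtree G P i)
  Finset.univ.sup fun u => if inSubtree G P i u then G.dist (P.getVert i) u else 0

/-!
In a tree the Fermat distance of a triple is half its perimeter,
`2 F(u,v,w) = d(u,v) + d(u,w) + d(v,w)`, attained at the median of the triple. Let `(a, b)` realise
`ε₃(u)` and let `v` be farthest from `u`. By the four-point condition of trees,
`d(u,v) + d(a,b)` is at most `d(u,a) + d(v,b)` or `d(u,b) + d(v,a)`; together with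
`d(u,a), d(u,b) ≤ d(u,v)` this gives `F(u,v,b) ≥ F(u,a,b)` or `F(u,v,a) ≥ F(u,a,b)`.
-/

namespace SimpleGraph

variable {G : SimpleGraph V}

lemma Walk.dist_add_dist_eq_of_length_eq_dist {x y z : V} (p : G.Walk x y)
    (hp : p.length = G.dist x y) (hz : z ∈ p.support) :
    G.dist x z + G.dist z y = G.dist x y := by
  classical
  have hsplit := congrArg Walk.length (p.take_spec hz)
  rw [Walk.length_append] at hsplit
  have := dist_le (p.takeUntil z hz)
  have := dist_le (p.dropUntil z hz)
  have := (p.takeUntil z hz).reachable.dist_triangle_left y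
  omega

lemma IsTree.length_eq_dist_of_isPath (hG : G.IsTree) {x y : V} {p : G.Walk x y}
    (hp : p.IsPath) : p.length = G.dist x y := by
  obtain ⟨q, hq, hql⟩ := hG.connected.exists_path_of_dist x y
  rw [(hG.existsUnique_path x y).unique hp hq, hql]

lemma IsTree.dist_add_dist_eq_of_mem_support (hG : G.IsTree) {x y z : V} {p : G.Walk x y}
    (hp : p.IsPath) (hz : z ∈ p.support) : G.dist x z + G.dist z y = G.dist x y :=
  p.dist_add_dist_eq_of_length_eq_dist (hG.length_eq_dist_of_isPath hp) hz

/-- If `m` is the vertex of a path `r` from `m` to `c` closest to `u`, then a geodesic from `u`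
to `m` followed by `r` is still a path, hence the geodesic from `u` to `c`. -/
lemma IsTree.dist_eq_add_of_forall_mem_support_dist_le (hG : G.IsTree) (u : V) {m c : V}
    {r : G.Walk m c} (hr : r.IsPath) (hmin : ∀ x ∈ r.support, G.dist u m ≤ G.dist u x) :
    G.dist u c = G.dist u m + G.dist m c := by
  obtain ⟨q, hq, hql⟩ := hG.connected.exists_path_of_dist u m
  have hqr : (q.append r).IsPath := by
    rw [Walk.isPath_def, Walk.support_append, List.nodup_append]
    refine ⟨hq.support_nodup, hr.support_nodup.tail, fun x hxq y hyr hxy => ?_⟩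
    subst hxy
    have hxm : x = m := by
      have := hG.dist_add_dist_eq_of_mem_support hq hxq
      have := hmin x (List.mem_of_mem_tail hyr)
      exact hG.connected.dist_eq_zero_iff.mp (by omega)
    subst hxm
    have hnodup := hr.support_nodup
    rw [← r.cons_tail_support] at hnodup
    exact (List.nodup_cons.mp hnodup).1 hyr
  rw [← hG.length_eq_dist_of_isPath hqr, Walk.length_append, hql,
    hG.length_eq_dist_of_isPath hr]

/-- The median of `u`, `a`, `b`, found on the path from `a` to `b`. -/
lemma IsTree.exists_mem_support_dist_eq_add (hG : G.IsTree) (u : V) {a b : V}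
    {p : G.Walk a b} (hp : p.IsPath) :
    ∃ m ∈ p.support, G.dist u a = G.dist u m + G.dist m a ∧
      G.dist u b = G.dist u m + G.dist m b := by
  classical
  obtain ⟨m, hm, hmin⟩ := p.support.toFinset.exists_min_image (G.dist u) ⟨a, by simp⟩
  rw [List.mem_toFinset] at hm
  refine ⟨m, hm, ?_, ?_⟩
  · refine hG.dist_eq_add_of_forall_mem_support_dist_le u (hp.takeUntil hm).reverse
      fun x hx => hmin x (List.mem_toFinset.mpr (p.support_takeUntil_subset_support hm ?_))
    simpa using hx
  · exact hG.dist_eq_add_of_forall_mem_support_dist_le u (hp.dropUntil hm)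
      fun x hx => hmin x (List.mem_toFinset.mpr (p.support_dropUntil_subset_support hm hx))

/-- The four-point condition of tree metrics. -/
lemma IsTree.dist_add_dist_le_or (hG : G.IsTree) (u v a b : V) :
    G.dist u v + G.dist a b ≤ G.dist u a + G.dist v b ∨
      G.dist u v + G.dist a b ≤ G.dist u b + G.dist v a := by
  classical
  obtain ⟨p, hp, -⟩ := hG.connected.exists_path_of_dist a b
  obtain ⟨m, hm, hua, hub⟩ := hG.exists_mem_support_dist_eq_add u hp
  obtain ⟨n, hn, hva, hvb⟩ := hG.exists_mem_support_dist_eq_add v hp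
  have hamb := hG.dist_add_dist_eq_of_mem_support hp hm
  have huv : G.dist u v ≤ G.dist u m + G.dist m n + G.dist n v :=
    hG.connected.dist_triangle.trans (add_le_add_left hG.connected.dist_triangle _)
  have hvn : G.dist n v = G.dist v n := dist_comm
  have hm' : m ∈ (p.takeUntil n hn).support ∨ m ∈ (p.dropUntil n hn).support := by
    rwa [← Walk.mem_support_append_iff, p.take_spec hn]
  rcases hm' with hm' | hm'
  · have hamn := hG.dist_add_dist_eq_of_mem_support (hp.takeUntil hn) hm'
    have : G.dist n a = G.dist a n := dist_comm
    have : G.dist m a = G.dist a m := dist_comm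
    omega
  · have hnmb := hG.dist_add_dist_eq_of_mem_support (hp.dropUntil hn) hm'
    have : G.dist n m = G.dist m n := dist_comm
    have : G.dist m a = G.dist a m := dist_comm
    omega

lemma Connected.le_two_mul_fermatDist (hG : G.Connected) (u a b : V) :
    G.dist u a + G.dist u b + G.dist a b ≤ 2 * fermatDist G u a b := by
  have : Nonempty V := ⟨u⟩
  obtain ⟨σ, hσ⟩ := ciInf_mem fun σ => G.dist σ u + G.dist σ a + G.dist σ b
  have hF : fermatDist G u a b = G.dist σ u + G.dist σ a + G.dist σ b := hσ.symm
  rw [hF]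
  have := hG.dist_triangle (u := u) (v := σ) (w := a)
  have := hG.dist_triangle (u := u) (v := σ) (w := b)
  have := hG.dist_triangle (u := a) (v := σ) (w := b)
  have : G.dist u σ = G.dist σ u := dist_comm
  have : G.dist a σ = G.dist σ a := dist_comm
  omega

lemma IsTree.two_mul_fermatDist (hG : G.IsTree) (u a b : V) :
    2 * fermatDist G u a b = G.dist u a + G.dist u b + G.dist a b := by
  obtain ⟨p, hp, -⟩ := hG.connected.exists_path_of_dist a b
  obtain ⟨m, hm, hua, hub⟩ := hG.exists_mem_support_dist_eq_add u hp
  have hamb := hG.dist_add_dist_eq_of_mem_support hp hm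
  have hle : fermatDist G u a b ≤ G.dist m u + G.dist m a + G.dist m b :=
    ciInf_le (OrderBot.bddBelow _) m
  have := hG.connected.le_two_mul_fermatDist u a b
  have : G.dist m u = G.dist u m := dist_comm
  have : G.dist a m = G.dist m a := dist_comm
  omega

end SimpleGraph

section Eccentricity

variable [Fintype V] (G : SimpleGraph V) (u : V)

lemma dist_le_ecc2 (v : V) : G.dist u v ≤ ecc2 G u :=
  Finset.le_sup (f := fun v => G.dist u v) (mem_univ v)

lemma exists_dist_eq_ecc2 : ∃ v, G.dist u v = ecc2 G u := by
  obtain ⟨v, -, hv⟩ := exists_mem_eq_sup univ ⟨u, mem_univ u⟩ fun v => G.dist u v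
  exact ⟨v, hv.symm⟩

lemma fermatDist_le_fermatEcc (v w : V) : fermatDist G u v w ≤ fermatEcc G u :=
  Finset.le_sup (f := fun p : V × V => fermatDist G u p.1 p.2) (mem_univ (v, w))

lemma exists_fermatDist_eq_fermatEcc : ∃ v w, fermatDist G u v w = fermatEcc G u := by
  obtain ⟨⟨v, w⟩, -, h⟩ :=
    exists_mem_eq_sup univ ⟨(u, u), mem_univ _⟩ fun p : V × V => fermatDist G u p.1 p.2
  exact ⟨v, w, h.symm⟩

end Eccentricity

/-- In a finite tree, a vertex at maximum distance from `u` can be chosen as one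
of the Fermat eccentric vertices of `u`. -/
theorem exists_fermat_eccentric_vertices_with_farthest [Fintype V] (T : SimpleGraph V)
    (hT : T.IsTree) (u : V) :
    ∃ v w : V, fermatDist T u v w = fermatEcc T u ∧ T.dist u v = ecc2 T u := by
  obtain ⟨v, hv⟩ := exists_dist_eq_ecc2 T u
  obtain ⟨a, b, hab⟩ := exists_fermatDist_eq_fermatEcc T u
  have ha := dist_le_ecc2 T u a
  have hb := dist_le_ecc2 T u b
  have hF := hT.two_mul_fermatDist u a b
  rcases hT.dist_add_dist_le_or u v a b with h | h
  · refine ⟨v, b, le_antisymm (fermatDist_le_fermatEcc T u v b) ?_, hv⟩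
    have := hT.two_mul_fermatDist u v b
    omega
  · refine ⟨v, a, le_antisymm (fermatDist_le_fermatEcc T u v a) ?_, hv⟩
    have := hT.two_mul_fermatDist u v a
    omega
end

section
/- Let T be a finite tree of diameter d with diametrical path P = v₀v₁⋯v_d containing all central vertices of T, and for 1 ≤ i ≤ d−1 let T_{v_i} be the maximal subtree of T rooted at v_i meeting the path only in v_i. Then for every vertex u ∈ V(T_{v_i}), ε₃(u;T) = d_T(u, v_i) + ε₃(v_i;T). -/
open SimpleGraph Finset

variable {V : Type*}

/-!
In a tree the median of three vertices is a Fermat point, so `2 F(x,y,z)` is the perimeter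
`d(x,y) + d(y,z) + d(x,z)`. Write `c = vᵢ`; then `c` lies on the geodesics from `u` to both
ends `v₀, v_d` of the diametrical path. The bound `ε₃(u) ≤ d(u,c) + ε₃(c)` holds in any
connected graph. Conversely, let `v, w` realise `ε₃(c)`. If `c` separates `u` from both, the
perimeter formula gives `F(u,v,w) = d(u,c) + F(c,v,w)`. Otherwise one of them lies on `u`'s
side of `c`, and the four-point condition bounds `ε₃(c) ≤ d(c,v) + d(c,w)` by `d`, while
`F(u,v₀,v_d) ≥ d(u,c) + d`.
-/

namespace SimpleGraph

variable {G T : SimpleGraph V}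

theorem Walk.IsPath.append_of_support_inter {x m y : V} {p : G.Walk x m} {q : G.Walk m y}
    (hp : p.IsPath) (hq : q.IsPath) (h : ∀ w ∈ p.support, w ∈ q.support → w = m) :
    (p.append q).IsPath := by
  have hq' := hq.support_nodup
  rw [← Walk.cons_tail_support q, List.nodup_cons] at hq'
  rw [Walk.isPath_def, Walk.support_append, List.nodup_append]
  refine ⟨hp.support_nodup, hq'.2, fun w hwp w' hw' hww' => ?_⟩
  subst hww'
  exact hq'.1 (h w hwp (List.mem_of_mem_tail hw') ▸ hw')

namespace IsTree

variable (hT : T.IsTree)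
include hT

theorem length_eq_dist_of_isPath_s6 {x y : V} {p : T.Walk x y} (hp : p.IsPath) :
    p.length = T.dist x y := by
  obtain ⟨q, hq, hql⟩ := hT.connected.exists_path_of_dist x y
  rw [← (hT.existsUnique_path x y).unique hq hp, hql]

theorem mem_support_iff_dist_add_dist {x y m : V} {p : T.Walk x y} (hp : p.IsPath) :
    m ∈ p.support ↔ T.dist x m + T.dist m y = T.dist x y := by
  classical
  constructor
  · intro hm
    rw [← hT.length_eq_dist_of_isPath_s6 (hp.takeUntil hm),
      ← hT.length_eq_dist_of_isPath_s6 (hp.dropUntil hm), ← hT.length_eq_dist_of_isPath_s6 hp,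
      ← Walk.length_append, Walk.take_spec]
  · intro hd
    obtain ⟨q₁, -, hl₁⟩ := hT.connected.exists_path_of_dist x m
    obtain ⟨q₂, -, hl₂⟩ := hT.connected.exists_path_of_dist m y
    have hq : (q₁.append q₂).IsPath :=
      Walk.isPath_of_length_eq_dist _ (by rw [Walk.length_append, hl₁, hl₂, hd])
    rw [← (hT.existsUnique_path x y).unique hq hp, Walk.mem_support_append_iff]
    exact Or.inl q₁.end_mem_support

/-- The median is the vertex farthest from `x` common to the geodesics from `x` to `y` and
to `z`; past it these geodesics share no vertex, so together they form the geodesic from `y`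
to `z`. -/
theorem exists_median (x y z : V) :
    ∃ m, T.dist x m + T.dist m y = T.dist x y ∧ T.dist x m + T.dist m z = T.dist x z ∧
      T.dist y m + T.dist m z = T.dist y z := by
  classical
  obtain ⟨p, hp, -⟩ := hT.connected.exists_path_of_dist x y
  obtain ⟨q, hq, -⟩ := hT.connected.exists_path_of_dist x z
  have hx : x ∈ p.support.toFinset ∩ q.support.toFinset := by simp
  obtain ⟨m, hm, hmax⟩ :=
    (p.support.toFinset ∩ q.support.toFinset).exists_max_image (T.dist x) ⟨x, hx⟩
  simp only [Finset.mem_inter, List.mem_toFinset] at hm hmax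
  obtain ⟨hmp, hmq⟩ := hm
  refine ⟨m, (hT.mem_support_iff_dist_add_dist hp).1 hmp,
    (hT.mem_support_iff_dist_add_dist hq).1 hmq, ?_⟩
  have hp' := hp.dropUntil hmp
  have hq' := hq.dropUntil hmq
  have hyz : ((p.dropUntil m hmp).reverse.append (q.dropUntil m hmq)).IsPath := by
    refine hp'.reverse.append_of_support_inter hq' fun w hw₁ hw₂ => ?_
    rw [Walk.support_reverse, List.mem_reverse] at hw₁
    have hwp := p.support_dropUntil_subset_support hmp hw₁
    have hwm := hmax w ⟨hwp, q.support_dropUntil_subset_support hmq hw₂⟩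
    have h₁ := (hT.mem_support_iff_dist_add_dist hp').1 hw₁
    have h₂ := (hT.mem_support_iff_dist_add_dist hp).1 hwp
    have h₃ := (hT.mem_support_iff_dist_add_dist hp).1 hmp
    exact (hT.connected.dist_eq_zero_iff.1 (by omega)).symm
  rw [← hT.length_eq_dist_of_isPath_s6 hyz, Walk.length_append, Walk.length_reverse,
    hT.length_eq_dist_of_isPath_s6 hp', hT.length_eq_dist_of_isPath_s6 hq', dist_comm]

theorem dist_add_dist_of_dist_le {z t m n : V} (hm : T.dist z m + T.dist m t = T.dist z t)
    (hn : T.dist z n + T.dist n t = T.dist z t) (hmn : T.dist z m ≤ T.dist z n) :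
    T.dist z m + T.dist m n = T.dist z n := by
  classical
  obtain ⟨p, hp, -⟩ := hT.connected.exists_path_of_dist z t
  have hmp := (hT.mem_support_iff_dist_add_dist hp).2 hm
  have hnp : n ∈ ((p.takeUntil m hmp).append (p.dropUntil m hmp)).support := by
    rw [Walk.take_spec]; exact (hT.mem_support_iff_dist_add_dist hp).2 hn
  rcases (Walk.mem_support_append_iff _ _).1 hnp with hn' | hn'
  · have := (hT.mem_support_iff_dist_add_dist (hp.takeUntil hmp)).1 hn'
    have : T.dist n m = T.dist m n := dist_comm
    omega
  · have := (hT.mem_support_iff_dist_add_dist (hp.dropUntil hmp)).1 hn'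
    omega

/-- The four-point condition: trees are `0`-hyperbolic. -/
theorem dist_add_dist_le_max (x y z t : V) :
    T.dist x y + T.dist z t ≤ max (T.dist x z + T.dist y t) (T.dist x t + T.dist y z) := by
  obtain ⟨m, hm₁, hm₂, hm₃⟩ := hT.exists_median z t x
  obtain ⟨n, hn₁, hn₂, hn₃⟩ := hT.exists_median z t y
  have hxy : T.dist x y ≤ T.dist x m + T.dist m y := hT.connected.dist_triangle
  have hmy : T.dist m y ≤ T.dist m n + T.dist n y := hT.connected.dist_triangle
  have := @dist_comm _ T x m; have := @dist_comm _ T m n; have := @dist_comm _ T x t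
  have := @dist_comm _ T y z; have := @dist_comm _ T x z; have := @dist_comm _ T y t
  have := @dist_comm _ T t m; have := @dist_comm _ T t n
  rcases le_total (T.dist z m) (T.dist z n) with hle | hle
  · have := hT.dist_add_dist_of_dist_le hm₁ hn₁ hle
    omega
  · have := hT.dist_add_dist_of_dist_le hn₁ hm₁ hle
    omega

theorem dist_le_max_of_forall_dist_le {a b : V} (hab : ∀ x y, T.dist x y ≤ T.dist a b)
    (c x : V) :
    T.dist c x ≤ max (T.dist c a) (T.dist c b) := by
  have := hT.dist_add_dist_le_max a b c x
  have := hab a x; have := hab b x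
  have := @dist_comm _ T a c; have := @dist_comm _ T b c
  omega

theorem dist_add_dist_le_of_lt {u c x y : V} (hx : T.dist u x < T.dist u c + T.dist c x)
    (hy : T.dist u y = T.dist u c + T.dist c y) : T.dist c x + T.dist c y ≤ T.dist x y := by
  have := hT.dist_add_dist_le_max u y x c
  have := @dist_comm _ T x c; have := @dist_comm _ T y c; have := @dist_comm _ T y x
  omega

theorem dist_add_dist_le_of_ne {a b c u x : V} (hab : ∀ x y, T.dist x y ≤ T.dist a b)
    (ha : T.dist u a = T.dist u c + T.dist c a) (hb : T.dist u b = T.dist u c + T.dist c b)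
    (hx : T.dist u x ≠ T.dist u c + T.dist c x) (y : V) :
    T.dist c x + T.dist c y ≤ T.dist a b := by
  have hlt := lt_of_le_of_ne (hT.connected.dist_triangle (v := c)) hx
  have := hT.dist_add_dist_le_of_lt hlt ha
  have := hT.dist_add_dist_le_of_lt hlt hb
  have := hT.dist_le_max_of_forall_dist_le hab c y
  have := hab x a; have := hab x b
  omega

end IsTree

end SimpleGraph

theorem fermatDist_le (G : SimpleGraph V) (x y z σ : V) :
    fermatDist G x y z ≤ G.dist σ x + G.dist σ y + G.dist σ z :=
  ciInf_le (OrderBot.bddBelow _) σ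

theorem fermatDist_le_dist_add_dist (G : SimpleGraph V) (x y z : V) :
    fermatDist G x y z ≤ G.dist x y + G.dist x z := by
  simpa using fermatDist_le G x y z x

theorem exists_fermatDist_eq [Nonempty V] (G : SimpleGraph V) (x y z : V) :
    ∃ σ, G.dist σ x + G.dist σ y + G.dist σ z = fermatDist G x y z :=
  Nat.sInf_mem (Set.range_nonempty _)

theorem fermatDist_le_fermatEcc_s6 [Fintype V] (G : SimpleGraph V) (x y z : V) :
    fermatDist G x y z ≤ fermatEcc G x :=
  Finset.le_sup (f := fun p : V × V => fermatDist G x p.1 p.2) (Finset.mem_univ (y, z))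

theorem exists_fermatEcc_eq [Fintype V] [Nonempty V] (G : SimpleGraph V) (x : V) :
    ∃ y z, fermatEcc G x = fermatDist G x y z := by
  obtain ⟨⟨y, z⟩, -, h⟩ := Finset.univ.exists_mem_eq_sup Finset.univ_nonempty
    fun p : V × V => fermatDist G x p.1 p.2
  exact ⟨y, z, h⟩

namespace SimpleGraph

namespace Connected

variable {G : SimpleGraph V} (hG : G.Connected)
include hG

theorem dist_add_dist_add_dist_le_two_mul_fermatDist (x y z : V) :
    G.dist x y + G.dist y z + G.dist x z ≤ 2 * fermatDist G x y z := by
  have := hG.nonempty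
  obtain ⟨σ, hσ⟩ := exists_fermatDist_eq G x y z
  have := hG.dist_triangle (u := x) (v := σ) (w := y)
  have := hG.dist_triangle (u := y) (v := σ) (w := z)
  have := hG.dist_triangle (u := x) (v := σ) (w := z)
  have := @dist_comm _ G x σ; have := @dist_comm _ G y σ
  omega

theorem fermatDist_le_dist_add (u c v w : V) :
    fermatDist G u v w ≤ G.dist u c + fermatDist G c v w := by
  have := hG.nonempty
  obtain ⟨σ, hσ⟩ := exists_fermatDist_eq G c v w
  have := fermatDist_le G u v w σ
  have := hG.dist_triangle (u := σ) (v := c) (w := u)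
  have := @dist_comm _ G c u
  omega

theorem fermatEcc_le_dist_add [Fintype V] (u c : V) :
    fermatEcc G u ≤ G.dist u c + fermatEcc G c :=
  Finset.sup_le fun p _ => (hG.fermatDist_le_dist_add u c p.1 p.2).trans
    (Nat.add_le_add_left (fermatDist_le_fermatEcc_s6 G c p.1 p.2) _)

theorem dist_add_dist_le_fermatDist {u c a b : V} (ha : G.dist u a = G.dist u c + G.dist c a)
    (hb : G.dist u b = G.dist u c + G.dist c b) :
    G.dist u c + G.dist a b ≤ fermatDist G u a b := by
  have := hG.dist_add_dist_add_dist_le_two_mul_fermatDist u a b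
  have := hG.dist_triangle (u := a) (v := c) (w := b)
  have := @dist_comm _ G a c
  omega

end Connected

theorem IsTree.two_mul_fermatDist_s6 {T : SimpleGraph V} (hT : T.IsTree) (x y z : V) :
    2 * fermatDist T x y z = T.dist x y + T.dist y z + T.dist x z := by
  obtain ⟨m, hxy, hxz, hyz⟩ := hT.exists_median x y z
  have := fermatDist_le T x y z m
  have := @dist_comm _ T m x; have := @dist_comm _ T m y
  have := hT.connected.dist_add_dist_add_dist_le_two_mul_fermatDist x y z
  omega

theorem IsTree.fermatEcc_eq_dist_add_fermatEcc [Fintype V] {T : SimpleGraph V} (hT : T.IsTree)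
    {a b c u : V} (hab : ∀ x y, T.dist x y ≤ T.dist a b)
    (ha : T.dist u a = T.dist u c + T.dist c a) (hb : T.dist u b = T.dist u c + T.dist c b) :
    fermatEcc T u = T.dist u c + fermatEcc T c := by
  refine le_antisymm (hT.connected.fermatEcc_le_dist_add u c) ?_
  have : Nonempty V := ⟨u⟩
  obtain ⟨v, w, hvw⟩ := exists_fermatEcc_eq T c
  have hfar (h : fermatEcc T c ≤ T.dist a b) : T.dist u c + fermatEcc T c ≤ fermatEcc T u :=
    (Nat.add_le_add_left h _).trans <| (hT.connected.dist_add_dist_le_fermatDist ha hb).trans <|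
      fermatDist_le_fermatEcc_s6 T u a b
  have hcvw := fermatDist_le_dist_add_dist T c v w
  by_cases hv : T.dist u v = T.dist u c + T.dist c v
  · by_cases hw : T.dist u w = T.dist u c + T.dist c w
    · have := hT.two_mul_fermatDist_s6 u v w
      have := hT.two_mul_fermatDist_s6 c v w
      have := fermatDist_le_fermatEcc_s6 T u v w
      omega
    · have := hT.dist_add_dist_le_of_ne hab ha hb hw v
      exact hfar (by omega)
  · have := hT.dist_add_dist_le_of_ne hab ha hb hv w
    exact hfar (by omega)

end SimpleGraph

theorem fermatEcc_in_subtree_general [Fintype V] (T : SimpleGraph V) (hT : T.IsTree)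
    {v₀ vd : V} (P : T.Walk v₀ vd) (hP : P.IsPath) (d : ℕ) (hlen : P.length = d)
    (hdiam : d = gdiam T)
    (i : ℕ)
    (u : V) (hu : inSubtree T P i u) :
    fermatEcc T u = T.dist u (P.getVert i) + fermatEcc T (P.getVert i) := by
  have hv₀vd : T.dist v₀ vd = d := hlen ▸ (hT.length_eq_dist_of_isPath_s6 hP).symm
  refine hT.fermatEcc_eq_dist_add_fermatEcc (a := v₀) (b := vd) (fun x y => ?_) ?_ ?_
  · rw [hv₀vd, hdiam]
    exact Finset.le_sup (f := fun p : V × V => T.dist p.1 p.2) (Finset.mem_univ (x, y))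
  · simpa using hu 0 (Nat.zero_le _)
  · simpa using hu P.length le_rfl

/-- For a diametrical path `v₀v₁⋯v_d` of a finite tree containing all central
vertices, and any vertex `u` of the subtree `T_{vᵢ}` hanging at `vᵢ` (`1 ≤ i ≤ d-1`), one has
`ε₃(u) = d(u,vᵢ) + ε₃(vᵢ)`. -/
theorem fermatEcc_in_subtree [Fintype V] (T : SimpleGraph V) (hT : T.IsTree)
    {v₀ vd : V} (P : T.Walk v₀ vd) (hP : P.IsPath) (d : ℕ) (hlen : P.length = d)
    (hdiam : d = gdiam T)
    (hcentral : ∀ c : V, isCentral T c → ∃ i ≤ d, P.getVert i = c)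
    (i : ℕ) (hi1 : 1 ≤ i) (hi2 : i ≤ d - 1)
    (u : V) (hu : inSubtree T P i u) :
    fermatEcc T u = T.dist u (P.getVert i) + fermatEcc T (P.getVert i) :=
  fermatEcc_in_subtree_general T hT P hP d hlen hdiam i u hu
end

section
/- There exists a finite connected bicyclic simple graph G (i.e., a connected graph with m(G) = n(G) + 1) such that F₂(G)/m(G) > F₁(G)/n(G); in particular, the inequality F₂(G)/m(G) ≤ F₁(G)/n(G), valid for acyclic and unicyclic graphs, fails for some bicyclic graph. -/
open SimpleGraph Finset

variable {V : Type*}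

/-!
The witness is a triangle `{3, 5, 6}` and a 4-cycle `{5, 6, 8, 9}` sharing the edge `56`, with the
path `3 - 0 - 1 - 2 - 4 - 7 - 10 - 11` attached at `3`; it has 12 vertices and 13 edges. The long
path makes every Fermat eccentricity 9 or 10, the value 10 being taken on `{5, 6, 8, 9, 11}`. The
4-cycle puts four edges between vertices of eccentricity 10, which tips the balance by the
smallest possible amount: `F₁ = 1067`, `F₂ = 1156` and `12 · 1156 = 13872 > 13871 = 13 · 1067`.
-/

namespace SimpleGraph

variable {G : SimpleGraph V} {D : V → V → ℕ}

theorem exists_walk_length_eq_of_descent (hD : ∀ u, D u u = 0)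
    (hstep : ∀ u v, u ≠ v → ∃ w, G.Adj u w ∧ D w v + 1 = D u v) (u v : V) :
    ∃ p : G.Walk u v, p.length = D u v := by
  induction hn : D u v using Nat.strong_induction_on generalizing u with
  | _ n ih =>
    by_cases huv : u = v
    · subst huv
      exact ⟨Walk.nil, by simp [← hn, hD]⟩
    · obtain ⟨w, hadj, hw⟩ := hstep u v huv
      obtain ⟨q, hq⟩ := ih (D w v) (by omega) w rfl
      exact ⟨Walk.cons hadj q, by simp [hq, ← hn, ← hw]⟩

theorem le_length_of_le_succ_of_adj (hD : ∀ u, D u u = 0)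
    (hlip : ∀ u v w, G.Adj u v → D u w ≤ D v w + 1) {u v : V} (p : G.Walk u v) :
    D u v ≤ p.length := by
  induction p with
  | nil => simp [hD]
  | cons h q ih => simpa [Nat.add_comm] using (hlip _ _ _ h).trans (by omega)

theorem preconnected_of_descent (hD : ∀ u, D u u = 0)
    (hstep : ∀ u v, u ≠ v → ∃ w, G.Adj u w ∧ D w v + 1 = D u v) : G.Preconnected :=
  fun u v => ⟨(exists_walk_length_eq_of_descent hD hstep u v).choose⟩

theorem dist_eq_of_descent (hD : ∀ u, D u u = 0)
    (hstep : ∀ u v, u ≠ v → ∃ w, G.Adj u w ∧ D w v + 1 = D u v)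
    (hlip : ∀ u v w, G.Adj u v → D u w ≤ D v w + 1) (u v : V) :
    G.dist u v = D u v := by
  apply le_antisymm
  · obtain ⟨p, hp⟩ := exists_walk_length_eq_of_descent hD hstep u v
    exact hp ▸ dist_le p
  · obtain ⟨p, hp⟩ := (preconnected_of_descent hD hstep u v).exists_walk_length_eq_dist
    exact hp ▸ le_length_of_le_succ_of_adj hD hlip p

end SimpleGraph

section FermatIndices

variable [Fintype V]

theorem fermatEcc_eq_sup_inf' [Nonempty V] (G : SimpleGraph V) (u : V) :
    fermatEcc G u = univ.sup fun p : V × V =>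
      univ.inf' univ_nonempty fun σ => G.dist σ u + G.dist σ p.1 + G.dist σ p.2 := by
  simp only [fermatEcc, fermatDist, Finset.inf'_univ_eq_ciInf]

theorem numEdges_eq_card_edgeFinset (G : SimpleGraph V) [Fintype G.edgeSet] :
    numEdges G = #G.edgeFinset := by
  unfold numEdges
  congr
  exact Subsingleton.elim _ _

theorem F2_eq_sum_of_fermatEcc_eq (G : SimpleGraph V) [Fintype G.edgeSet] {f : V → ℕ}
    (hf : ∀ u, fermatEcc G u = f u) :
    F2 G = ∑ e ∈ G.edgeFinset, Sym2.lift ⟨fun u v => f u * f v, fun _ _ => mul_comm _ _⟩ e := by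
  obtain rfl : fermatEcc G = f := funext hf
  unfold F2
  congr
  exact Subsingleton.elim _ _

end FermatIndices

def exampleGraph : SimpleGraph (Fin 12) :=
  fromEdgeSet ({s(0, 1), s(0, 3), s(1, 2), s(2, 4), s(3, 5), s(3, 6), s(4, 7), s(5, 6), s(5, 9),
    s(6, 8), s(7, 10), s(8, 9), s(10, 11)} : Finset (Sym2 (Fin 12)))

instance : DecidableRel exampleGraph.Adj :=
  inferInstanceAs (DecidableRel (fromEdgeSet (_ : Set (Sym2 (Fin 12)))).Adj)

def exampleDist : Fin 12 → Fin 12 → ℕ :=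
  ![![0, 1, 2, 1, 3, 2, 2, 4, 3, 3, 5, 6],
    ![1, 0, 1, 2, 2, 3, 3, 3, 4, 4, 4, 5],
    ![2, 1, 0, 3, 1, 4, 4, 2, 5, 5, 3, 4],
    ![1, 2, 3, 0, 4, 1, 1, 5, 2, 2, 6, 7],
    ![3, 2, 1, 4, 0, 5, 5, 1, 6, 6, 2, 3],
    ![2, 3, 4, 1, 5, 0, 1, 6, 2, 1, 7, 8],
    ![2, 3, 4, 1, 5, 1, 0, 6, 1, 2, 7, 8],
    ![4, 3, 2, 5, 1, 6, 6, 0, 7, 7, 1, 2],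
    ![3, 4, 5, 2, 6, 2, 1, 7, 0, 1, 8, 9],
    ![3, 4, 5, 2, 6, 1, 2, 7, 1, 0, 8, 9],
    ![5, 4, 3, 6, 2, 7, 7, 1, 8, 8, 0, 1],
    ![6, 5, 4, 7, 3, 8, 8, 2, 9, 9, 1, 0]]

theorem exampleDist_self : ∀ u, exampleDist u u = 0 := by decide

theorem exists_adj_exampleDist_succ_eq :
    ∀ u v, u ≠ v → ∃ w, exampleGraph.Adj u w ∧ exampleDist w v + 1 = exampleDist u v := by
  decide

theorem exampleDist_le_succ_of_adj :
    ∀ u v w, exampleGraph.Adj u v → exampleDist u w ≤ exampleDist v w + 1 := by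
  decide

theorem exampleGraph_connected : exampleGraph.Connected :=
  (connected_iff _).mpr
    ⟨preconnected_of_descent exampleDist_self exists_adj_exampleDist_succ_eq, ⟨0⟩⟩

theorem exampleGraph_dist (u v : Fin 12) : exampleGraph.dist u v = exampleDist u v :=
  dist_eq_of_descent exampleDist_self exists_adj_exampleDist_succ_eq
    exampleDist_le_succ_of_adj u v

def exampleFermatEcc : Fin 12 → ℕ := ![9, 9, 9, 9, 9, 10, 10, 9, 10, 10, 9, 10]

set_option maxRecDepth 10000 in
theorem fermatEcc_exampleGraph : ∀ u, fermatEcc exampleGraph u = exampleFermatEcc u := by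
  simp only [fermatEcc_eq_sup_inf', exampleGraph_dist]
  decide

theorem numEdges_exampleGraph : numEdges exampleGraph = 13 := by
  rw [numEdges_eq_card_edgeFinset]
  decide

theorem F1_exampleGraph : F1 exampleGraph = 1067 := by
  simp only [F1, fermatEcc_exampleGraph]
  decide

theorem F2_exampleGraph : F2 exampleGraph = 1156 := by
  rw [F2_eq_sum_of_fermatEcc_eq _ fermatEcc_exampleGraph]
  decide

/-- There is a finite connected bicyclic graph (`m = n + 1`) with
`F₂(G)/m > F₁(G)/n`. -/
theorem exists_bicyclic_avg_F2_gt_avg_F1 :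
    ∃ (n : ℕ) (G : SimpleGraph (Fin n)), G.Connected ∧ numEdges G = n + 1 ∧
      (F1 G : ℚ) / (n : ℚ) < (F2 G : ℚ) / (numEdges G : ℚ) := by
  refine ⟨12, exampleGraph, exampleGraph_connected, numEdges_exampleGraph, ?_⟩
  rw [F1_exampleGraph, F2_exampleGraph, numEdges_exampleGraph]
  norm_num
end
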